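/- The function ε ↦ u_c(ε) := λ(diag(μ_1(1),…,μ_n(1)) + ε T) is non-increasing on [0,∞). Moreover u_c(0) = max_{1≤j≤n} μ_j(1), and u_c(ε) → (1/n) Σ_{j=1}^n μ_j(1) as ε → +∞. -/

import Mathlib

open Matrix Filter Set Topology Asymptotics

noncomputable section

/-- The mutation matrix `T` (discrete Neumann Laplacian): `T i j = 1` if `|i-j| = 1`,
diagonal entries `-1` at the ends and `-2` inside (minus number of neighbors), `0` otherwise. -/
def mutT (n : ℕ) : Matrix (Fin n) (Fin n) ℝ :=
  Matrix.of fun i j =>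
    if ((i : ℕ) + 1 = (j : ℕ) ∨ (j : ℕ) + 1 = (i : ℕ)) then 1
    else if i = j then
      -((if 0 < (i : ℕ) then (1 : ℝ) else 0) + (if (i : ℕ) + 1 < n then (1 : ℝ) else 0))
    else 0

/-- Monod kinetics `μ(s) = m s / (a + s)`. -/
def monod (m a s : ℝ) : ℝ := m * s / (a + s)

/-- The largest eigenvalue of a (symmetric) real matrix. -/
def maxEig {n : ℕ} (A : Matrix (Fin n) (Fin n) ℝ) : ℝ :=
  sSup {t : ℝ | ∃ v : Fin n → ℝ, v ≠ 0 ∧ A.mulVec v = t • v}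

/-- The matrix `B(s,u,ε) = diag(μ₁(s),…,μₙ(s)) - u Iₙ + ε T`. -/
def Bmat (n : ℕ) (m a : Fin n → ℝ) (s u ε : ℝ) : Matrix (Fin n) (Fin n) ℝ :=
  Matrix.diagonal (fun i => monod (m i) (a i) s) - u • (1 : Matrix (Fin n) (Fin n) ℝ)
    + ε • mutT n

/-- `(x, s)` is a solution of the chemostat system with mutation (S). -/
def IsSol (n : ℕ) (m a : Fin n → ℝ) (ε u : ℝ) (x : ℝ → Fin n → ℝ) (s : ℝ → ℝ) : Prop :=
  ∀ t : ℝ, 0 ≤ t →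
    (∀ i, HasDerivAt (fun τ => x τ i)
        ((monod (m i) (a i) (s t) - u) * x t i + ε * (mutT n).mulVec (x t) i) t) ∧
    HasDerivAt s (-(∑ j, monod (m j) (a j) (s t) * x t j) + u * (1 - s t)) t

/-- Admissible initial conditions `D = (ℝ₊ⁿ \ {0}) × [0,1]`. -/
def InD (n : ℕ) (x0 : Fin n → ℝ) (s0 : ℝ) : Prop :=
  (∀ i, 0 ≤ x0 i) ∧ x0 ≠ 0 ∧ s0 ∈ Set.Icc (0 : ℝ) 1

/-! Writing `mutT n = -L` with `L` the Laplacian of the path graph on `Fin n`, the quadratic form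
`v ⬝ᵥ mutT n *ᵥ v = -∑ (vᵢ₊₁ - vᵢ)²` is nonpositive and vanishes exactly on constant vectors.
The largest eigenvalue of a symmetric matrix is the maximum of its Rayleigh quotient, so
`ε ↦ λ(D + ε T)` is antitone, equals `max dᵢ` at `ε = 0`, and is at least the Rayleigh quotient
`(∑ dᵢ) / n` of the constant vector. Conversely, write `v = c 𝟙 + w` with `∑ wᵢ = 0`: the spectral
gap `w ⬝ᵥ T *ᵥ w ≤ -γ ‖w‖²` lets `ε T` absorb, once `ε` is large, every term of `v ⬝ᵥ D *ᵥ v`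
except `(1 + s) (∑ dᵢ) c²`, whence `λ(D + ε T) ≤ (1 + s) (∑ dᵢ) / n` for any `s > 0`. -/

open SimpleGraph

instance (n : ℕ) : DecidableRel (pathGraph n).Adj := fun _ _ => decidable_of_iff' _ pathGraph_adj

lemma pathGraph_degree {n : ℕ} (i : Fin n) :
    ((pathGraph n).degree i : ℝ) =
      (if 0 < (i : ℕ) then 1 else 0) + (if (i : ℕ) + 1 < n then 1 else 0) := by
  have hsplit : ∀ j : Fin n, (if (pathGraph n).Adj i j then (1 : ℝ) else 0) =
      (if (j : ℕ) = i - 1 ∧ 0 < (i : ℕ) then 1 else 0) + (if (i : ℕ) + 1 = j then 1 else 0) := by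
    intro j
    simp only [pathGraph_adj]
    split_ifs <;> first | omega | norm_num
  rw [degree_eq_sum_if_adj, Finset.sum_congr rfl fun j _ => hsplit j, Finset.sum_add_distrib,
    Fin.sum_univ_eq_sum_range (fun k => if k = (i : ℕ) - 1 ∧ 0 < (i : ℕ) then (1 : ℝ) else 0),
    Fin.sum_univ_eq_sum_range (fun k => if (i : ℕ) + 1 = k then (1 : ℝ) else 0)]
  simp only [Finset.sum_ite_eq', Finset.sum_ite_eq, Finset.mem_range, ite_and,
    if_pos (show (i : ℕ) - 1 < n by omega)]

section MutationMatrix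

variable {n : ℕ}

lemma mutT_eq_neg_lapMatrix (n : ℕ) : mutT n = -(pathGraph n).lapMatrix ℝ := by
  ext i j
  simp only [mutT, lapMatrix, degMatrix, of_apply, Matrix.neg_apply, Matrix.sub_apply,
    diagonal_apply, adjMatrix_apply, pathGraph_adj]
  split_ifs with h1 h2 <;> first | omega | simp_all [pathGraph_degree]

lemma mutT_isSymm : (mutT n).IsSymm := by
  rw [mutT_eq_neg_lapMatrix]
  exact (isSymm_lapMatrix ℝ _).neg

lemma mutT_isHermitian : (mutT n).IsHermitian := by
  rw [mutT_eq_neg_lapMatrix]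
  exact (isHermitian_lapMatrix ℝ _).neg

lemma isHermitian_diagonal_add_smul_mutT (d : Fin n → ℝ) (ε : ℝ) :
    (diagonal d + ε • mutT n).IsHermitian :=
  (isHermitian_diagonal d).add (mutT_isHermitian.smul (IsSelfAdjoint.all ε))

lemma dotProduct_mutT_mulVec (v : Fin n → ℝ) :
    v ⬝ᵥ (mutT n *ᵥ v) = -toLinearMap₂' ℝ ((pathGraph n).lapMatrix ℝ) v v := by
  rw [mutT_eq_neg_lapMatrix, neg_mulVec, dotProduct_neg, toLinearMap₂'_apply']

lemma dotProduct_mutT_mulVec_nonpos (v : Fin n → ℝ) : v ⬝ᵥ (mutT n *ᵥ v) ≤ 0 := by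
  rw [dotProduct_mutT_mulVec, neg_nonpos, lapMatrix_toLinearMap₂']
  positivity

lemma dotProduct_mutT_mulVec_eq_zero_iff (v : Fin n → ℝ) :
    v ⬝ᵥ (mutT n *ᵥ v) = 0 ↔ ∀ i j, v i = v j := by
  rw [dotProduct_mutT_mulVec, neg_eq_zero,
    lapMatrix_toLinearMap₂'_apply'_eq_zero_iff_forall_reachable]
  exact forall₂_congr fun i j => ⟨fun h => h (pathGraph_preconnected n i j), fun h _ => h⟩

lemma mutT_mulVec_const (c : ℝ) : mutT n *ᵥ (fun _ => c) = 0 := by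
  have hc : (fun _ : Fin n => c) = c • fun _ => 1 := by ext; simp
  rw [mutT_eq_neg_lapMatrix, neg_mulVec, hc, mulVec_smul, lapMatrix_mulVec_const_eq_zero,
    smul_zero, neg_zero]

lemma dotProduct_mutT_mulVec_add_const (w : Fin n → ℝ) (c : ℝ) :
    (w + fun _ => c) ⬝ᵥ (mutT n *ᵥ (w + fun _ => c)) = w ⬝ᵥ (mutT n *ᵥ w) := by
  rw [mulVec_add, mutT_mulVec_const, add_zero, add_dotProduct, dotProduct_mulVec (fun _ => c),
    ← mulVec_transpose, mutT_isSymm.eq, mutT_mulVec_const, zero_dotProduct, add_zero]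

end MutationMatrix

section DotProduct

variable {n : ℕ}

lemma dotProduct_self_pos {v : Fin n → ℝ} (hv : v ≠ 0) : 0 < v ⬝ᵥ v := by
  simpa using dotProduct_self_star_pos_iff.2 hv

lemma dotProduct_mulVec_of_mulVec_eq_smul {A : Matrix (Fin n) (Fin n) ℝ} {R : ℝ} {v : Fin n → ℝ}
    (hAv : A *ᵥ v = R • v) :
    v ⬝ᵥ (A *ᵥ v) = R * (v ⬝ᵥ v) := by
  rw [hAv, dotProduct_smul, smul_eq_mul]

lemma dotProduct_add_smul_mulVec (A B : Matrix (Fin n) (Fin n) ℝ) (ε : ℝ)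
    (v : Fin n → ℝ) :
    v ⬝ᵥ ((A + ε • B) *ᵥ v) = v ⬝ᵥ (A *ᵥ v) + ε * (v ⬝ᵥ (B *ᵥ v)) := by
  rw [add_mulVec, smul_mulVec, dotProduct_add, dotProduct_smul, smul_eq_mul]

lemma dotProduct_diagonal_mulVec (d v : Fin n → ℝ) :
    v ⬝ᵥ (diagonal d *ᵥ v) = ∑ i, d i * v i ^ 2 := by
  simp only [dotProduct, mulVec_diagonal]
  exact Finset.sum_congr rfl fun i _ => by ring

lemma dotProduct_add_const_self {w : Fin n → ℝ} (hw : ∑ i, w i = 0) (c : ℝ) :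
    (w + fun _ => c) ⬝ᵥ (w + fun _ => c) = n * c ^ 2 + w ⬝ᵥ w := by
  have h : ∀ i, (w i + c) * (w i + c) = w i * w i + 2 * c * w i + c ^ 2 := fun i => by ring
  simp only [dotProduct, Pi.add_apply, h, Finset.sum_add_distrib, ← Finset.mul_sum, hw,
    Finset.sum_const, Finset.card_univ, Fintype.card_fin, nsmul_eq_mul]
  ring

lemma exists_sum_eq_zero_eq_add_const [NeZero n] (v : Fin n → ℝ) :
    ∃ c : ℝ, ∃ w : Fin n → ℝ, ∑ i, w i = 0 ∧ v = w + fun _ => c := by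
  refine ⟨(∑ i, v i) / n, v - fun _ => (∑ i, v i) / n, ?_, by simp⟩
  have : (n : ℝ) ≠ 0 := NeZero.ne _
  simp [Finset.sum_sub_distrib, mul_div_cancel₀ _ this]

end DotProduct

lemma add_sq_le_one_add_mul_sq_add_one_add_inv_mul_sq {s : ℝ} (hs : 0 < s) (x y : ℝ) :
    (x + y) ^ 2 ≤ (1 + s) * x ^ 2 + (1 + s⁻¹) * y ^ 2 := by
  have h : (1 + s) * x ^ 2 + (1 + s⁻¹) * y ^ 2 - (x + y) ^ 2 = (s * x - y) ^ 2 / s := by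
    field_simp
    ring
  have : 0 ≤ (s * x - y) ^ 2 / s := by positivity
  linarith

lemma sum_mul_add_const_sq_le {n : ℕ} {d : Fin n → ℝ} (hd : ∀ i, 0 ≤ d i) {s : ℝ} (hs : 0 < s)
    (w : Fin n → ℝ) (c : ℝ) :
    ∑ i, d i * (w i + c) ^ 2 ≤ (1 + s) * (∑ i, d i) * c ^ 2 + (1 + s⁻¹) * (∑ i, d i) * (w ⬝ᵥ w) :=
  calc ∑ i, d i * (w i + c) ^ 2
      ≤ ∑ i, d i * ((1 + s) * c ^ 2 + (1 + s⁻¹) * w i ^ 2) :=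
        Finset.sum_le_sum fun i _ => mul_le_mul_of_nonneg_left
          (by rw [add_comm]; exact add_sq_le_one_add_mul_sq_add_one_add_inv_mul_sq hs c (w i))
          (hd i)
    _ = (1 + s) * (∑ i, d i) * c ^ 2 + (1 + s⁻¹) * ∑ i, d i * w i ^ 2 := by
        simp only [mul_add, Finset.sum_add_distrib, Finset.sum_mul, Finset.mul_sum]
        congr 1 <;> exact Finset.sum_congr rfl fun i _ => by ring
    _ ≤ (1 + s) * (∑ i, d i) * c ^ 2 + (1 + s⁻¹) * ((∑ i, d i) * (w ⬝ᵥ w)) := by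
        gcongr
        rw [dotProduct, Finset.mul_sum]
        refine Finset.sum_le_sum fun i _ => ?_
        rw [sq]
        exact mul_le_mul_of_nonneg_right
          (Finset.single_le_sum (fun j _ => hd j) (Finset.mem_univ i)) (mul_self_nonneg _)
    _ = (1 + s) * (∑ i, d i) * c ^ 2 + (1 + s⁻¹) * (∑ i, d i) * (w ⬝ᵥ w) := by ring

section RayleighQuotient

variable {n : ℕ} {A B : Matrix (Fin n) (Fin n) ℝ}

lemma maxEig_eq_of_mulVec_eq_smul_of_forall_le {R : ℝ} {v : Fin n → ℝ} (hv : v ≠ 0)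
    (hAv : A *ᵥ v = R • v) (hR : ∀ w, w ⬝ᵥ (A *ᵥ w) ≤ R * (w ⬝ᵥ w)) : maxEig A = R := by
  refine IsGreatest.csSup_eq ⟨⟨v, hv, hAv⟩, ?_⟩
  rintro t ⟨w, hw, hAw⟩
  have hRw := hR w
  rw [dotProduct_mulVec_of_mulVec_eq_smul hAw] at hRw
  exact le_of_mul_le_mul_right hRw (dotProduct_self_pos hw)

variable [NeZero n]

lemma Matrix.IsHermitian.exists_mulVec_eq_smul_forall_le (hA : A.IsHermitian) :
    ∃ R, ∃ v ≠ 0, A *ᵥ v = R • v ∧ ∀ w, w ⬝ᵥ (A *ᵥ w) ≤ R * (w ⬝ᵥ w) := by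
  set T := toEuclideanLin A
  have hbdd : BddAbove (Set.range fun x : {x : EuclideanSpace ℝ (Fin n) // x ≠ 0} =>
      RCLike.re (inner ℝ (T x) (x : EuclideanSpace ℝ (Fin n))) /
        ‖(x : EuclideanSpace ℝ (Fin n))‖ ^ 2) :=
    ⟨‖LinearMap.toContinuousLinearMap T‖, by
      rintro _ ⟨x, rfl⟩
      exact le_of_abs_le ((LinearMap.toContinuousLinearMap T).rayleighQuotient_le_norm x)⟩
  obtain ⟨x, hx⟩ := (isSymmetric_toEuclideanLin_iff.2 hA).hasEigenvalue_iSup_of_finiteDimensional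
    |>.exists_hasEigenvector
  refine ⟨_, WithLp.ofLp x, by simpa using hx.2, congrArg WithLp.ofLp hx.apply_eq_smul,
    fun w => ?_⟩
  rcases eq_or_ne w 0 with rfl | hw
  · simp
  have hnum : RCLike.re (inner ℝ (T (WithLp.toLp 2 w)) (WithLp.toLp 2 w)) = w ⬝ᵥ (A *ᵥ w) := by
    simp [T, toLpLin_toLp, EuclideanSpace.inner_toLp_toLp]
  have hden : ‖WithLp.toLp 2 w‖ ^ 2 = w ⬝ᵥ w := by
    rw [← real_inner_self_eq_norm_sq, EuclideanSpace.inner_toLp_toLp, star_trivial]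
  have := le_ciSup hbdd ⟨WithLp.toLp 2 w, by simpa using hw⟩
  rwa [hnum, hden, div_le_iff₀ (dotProduct_self_pos hw)] at this

lemma Matrix.IsHermitian.dotProduct_mulVec_le_maxEig_mul (hA : A.IsHermitian) (w : Fin n → ℝ) :
    w ⬝ᵥ (A *ᵥ w) ≤ maxEig A * (w ⬝ᵥ w) := by
  obtain ⟨R, v, hv, hAv, hR⟩ := hA.exists_mulVec_eq_smul_forall_le
  rw [maxEig_eq_of_mulVec_eq_smul_of_forall_le hv hAv hR]
  exact hR w

lemma Matrix.IsHermitian.maxEig_le {c : ℝ} (hA : A.IsHermitian)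
    (h : ∀ w, w ⬝ᵥ (A *ᵥ w) ≤ c * (w ⬝ᵥ w)) : maxEig A ≤ c := by
  obtain ⟨R, v, hv, hAv, hR⟩ := hA.exists_mulVec_eq_smul_forall_le
  rw [maxEig_eq_of_mulVec_eq_smul_of_forall_le hv hAv hR]
  have hcv := h v
  rw [dotProduct_mulVec_of_mulVec_eq_smul hAv] at hcv
  exact le_of_mul_le_mul_right hcv (dotProduct_self_pos hv)

lemma Matrix.IsHermitian.maxEig_le_maxEig (hA : A.IsHermitian) (hB : B.IsHermitian)
    (h : ∀ w, w ⬝ᵥ (A *ᵥ w) ≤ w ⬝ᵥ (B *ᵥ w)) : maxEig A ≤ maxEig B :=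
  hA.maxEig_le fun w => (h w).trans (hB.dotProduct_mulVec_le_maxEig_mul w)

end RayleighQuotient

lemma maxEig_diagonal {n : ℕ} (d : Fin n → ℝ) : maxEig (diagonal d) = ⨆ i, d i := by
  have hspec : {t : ℝ | ∃ v : Fin n → ℝ, v ≠ 0 ∧ diagonal d *ᵥ v = t • v} = Set.range d := by
    ext t
    constructor
    · rintro ⟨v, hv, hdv⟩
      obtain ⟨i, hi⟩ := Function.ne_iff.1 hv
      have hdvi := congrFun hdv i
      simp only [mulVec_diagonal, Pi.smul_apply, smul_eq_mul] at hdvi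
      exact ⟨i, mul_right_cancel₀ hi hdvi⟩
    · rintro ⟨i, rfl⟩
      refine ⟨Pi.single i 1, by simp, funext fun j => ?_⟩
      rcases eq_or_ne j i with rfl | hji <;> simp [mulVec_diagonal, *]
  rw [maxEig, hspec, iSup]

section LargeMutation

variable {n : ℕ} [NeZero n]

lemma exists_pos_forall_sum_eq_zero_dotProduct_mutT_mulVec_le :
    ∃ γ > 0, ∀ w : Fin n → ℝ, ∑ i, w i = 0 → w ⬝ᵥ (mutT n *ᵥ w) ≤ -γ * (w ⬝ᵥ w) := by
  set J : Matrix (Fin n) (Fin n) ℝ := of fun _ _ => 1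
  have hJ : J.IsHermitian := IsHermitian.ext fun i j => by simp [J]
  have hquad : ∀ w, w ⬝ᵥ ((mutT n - J) *ᵥ w) = w ⬝ᵥ (mutT n *ᵥ w) - (∑ i, w i) ^ 2 := by
    intro w
    have hJw : J *ᵥ w = fun _ => ∑ i, w i := by ext; simp [J, mulVec, dotProduct]
    rw [sub_mulVec, dotProduct_sub, hJw]
    simp [dotProduct, ← Finset.sum_mul, sq]
  obtain ⟨R, v, hv, hAv, hR⟩ := (mutT_isHermitian.sub hJ).exists_mulVec_eq_smul_forall_le
  -- Subtracting the all-ones matrix `J` penalises the constant vectors, on which the form of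
  -- `mutT n` vanishes; so `mutT n - J` is negative definite and `γ` is minus its top eigenvalue.
  have hneg : v ⬝ᵥ ((mutT n - J) *ᵥ v) < 0 := by
    rw [hquad]
    rcases (dotProduct_mutT_mulVec_nonpos v).lt_or_eq with h | h
    · linarith [sq_nonneg (∑ i, v i)]
    · obtain ⟨i, hi⟩ := Function.ne_iff.1 hv
      have hsum : ∑ j, v j = n * v i := by
        simp [(dotProduct_mutT_mulVec_eq_zero_iff v).1 h _ i]
      rw [h, hsum, zero_sub, neg_neg_iff_pos]
      exact pow_two_pos_of_ne_zero (mul_ne_zero (NeZero.ne _) hi)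
  rw [dotProduct_mulVec_of_mulVec_eq_smul hAv] at hneg
  refine ⟨-R, neg_pos.2 (neg_of_mul_neg_left hneg (dotProduct_self_pos hv).le), fun w hw => ?_⟩
  have := hR w
  rw [hquad, hw] at this
  linarith

lemma antitone_maxEig_diagonal_add_smul_mutT (d : Fin n → ℝ) :
    Antitone fun ε : ℝ => maxEig (diagonal d + ε • mutT n) := by
  intro ε₁ ε₂ hε
  refine (isHermitian_diagonal_add_smul_mutT d ε₂).maxEig_le_maxEig
    (isHermitian_diagonal_add_smul_mutT d ε₁) fun w => ?_
  rw [dotProduct_add_smul_mulVec, dotProduct_add_smul_mulVec]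
  linarith [mul_le_mul_of_nonpos_right hε (dotProduct_mutT_mulVec_nonpos w)]

lemma mean_le_maxEig_diagonal_add_smul_mutT (d : Fin n → ℝ) (ε : ℝ) :
    (∑ i, d i) / n ≤ maxEig (diagonal d + ε • mutT n) := by
  have h := (isHermitian_diagonal_add_smul_mutT d ε).dotProduct_mulVec_le_maxEig_mul fun _ => 1
  rw [dotProduct_add_smul_mulVec, dotProduct_diagonal_mulVec, mutT_mulVec_const,
    dotProduct_zero] at h
  rw [div_le_iff₀ (Nat.cast_pos.2 (Nat.pos_of_neZero n))]
  simpa [dotProduct] using h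

lemma maxEig_diagonal_add_smul_mutT_le {d : Fin n → ℝ} (hd : ∀ i, 0 ≤ d i) {γ s ε : ℝ}
    (hγ : 0 < γ) (hgap : ∀ w : Fin n → ℝ, ∑ i, w i = 0 → w ⬝ᵥ (mutT n *ᵥ w) ≤ -γ * (w ⬝ᵥ w))
    (hs : 0 < s) (hε : (1 + s⁻¹) * ∑ i, d i ≤ ε * γ) :
    maxEig (diagonal d + ε • mutT n) ≤ (1 + s) * ((∑ i, d i) / n) := by
  set M := ∑ i, d i
  have hM : 0 ≤ M := Finset.sum_nonneg fun i _ => hd i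
  have hε₀ : 0 ≤ ε := (mul_nonneg_iff_of_pos_right hγ).1 ((mul_nonneg (by positivity) hM).trans hε)
  refine (isHermitian_diagonal_add_smul_mutT d ε).maxEig_le fun v => ?_
  obtain ⟨c, w, hw, rfl⟩ := exists_sum_eq_zero_eq_add_const v
  rw [dotProduct_add_smul_mulVec, dotProduct_diagonal_mulVec, dotProduct_mutT_mulVec_add_const,
    dotProduct_add_const_self hw]
  simp only [Pi.add_apply]
  have hdiag := sum_mul_add_const_sq_le hd hs w c
  have hww : 0 ≤ w ⬝ᵥ w := Finset.sum_nonneg fun i _ => mul_self_nonneg _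
  have hmut := mul_le_mul_of_nonneg_left (hgap w hw) hε₀
  have hcoef := mul_le_mul_of_nonneg_right hε hww
  have hn : (1 + s) * (M / n) * (n * c ^ 2) = (1 + s) * M * c ^ 2 := by
    field_simp [NeZero.ne n]
  have hw_coef : 0 ≤ (1 + s) * (M / n) * (w ⬝ᵥ w) := by positivity
  rw [mul_add, hn]
  linarith

lemma tendsto_maxEig_diagonal_add_smul_mutT {d : Fin n → ℝ} (hd : ∀ i, 0 ≤ d i) :
    Tendsto (fun ε : ℝ => maxEig (diagonal d + ε • mutT n)) atTop (𝓝 ((∑ i, d i) / n)) := by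
  obtain ⟨γ, hγ, hgap⟩ := exists_pos_forall_sum_eq_zero_dotProduct_mutT_mulVec_le (n := n)
  refine tendsto_order.2 ⟨fun b hb => .of_forall fun ε =>
    hb.trans_le (mean_le_maxEig_diagonal_add_smul_mutT d ε), fun b hb => ?_⟩
  obtain ⟨s, hs, hsb⟩ := exists_pos_mul_lt (sub_pos.2 hb) ((∑ i, d i) / n)
  filter_upwards [eventually_ge_atTop ((1 + s⁻¹) * (∑ i, d i) / γ)] with ε hε
  refine (maxEig_diagonal_add_smul_mutT_le hd hγ hgap hs ((div_le_iff₀ hγ).1 hε)).trans_lt ?_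
  linarith

end LargeMutation

/-- `ε ↦ u_c(ε) = λ(diag(μ(1)) + εT)` is non-increasing on `[0,∞)`,
`u_c(0) = max_j μ_j(1)`, and `u_c(ε) → (1/n) Σ_j μ_j(1)` as `ε → ∞`. -/
theorem stmt_10 (n : ℕ) (hn : 1 ≤ n) (m a : Fin n → ℝ)
    (hm : ∀ i, 0 < m i) (ha : ∀ i, 0 < a i) :
    AntitoneOn
      (fun ε : ℝ => maxEig (Matrix.diagonal (fun i => monod (m i) (a i) 1) + ε • mutT n))
      (Set.Ici (0 : ℝ)) ∧
    maxEig (Matrix.diagonal (fun i => monod (m i) (a i) 1) + (0 : ℝ) • mutT n)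
      = ⨆ j : Fin n, monod (m j) (a j) 1 ∧
    Tendsto
      (fun ε : ℝ => maxEig (Matrix.diagonal (fun i => monod (m i) (a i) 1) + ε • mutT n))
      atTop (𝓝 ((1 / (n : ℝ)) * ∑ j, monod (m j) (a j) 1)) := by
  have : NeZero n := ⟨by omega⟩
  have hμ : ∀ i, 0 ≤ monod (m i) (a i) 1 := fun i =>
    (div_pos (mul_pos (hm i) one_pos) (add_pos (ha i) one_pos)).le
  refine ⟨(antitone_maxEig_diagonal_add_smul_mutT _).antitoneOn _, ?_, ?_⟩
  · rw [zero_smul, add_zero, maxEig_diagonal]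
  · simpa only [one_div_mul_eq_div] using tendsto_maxEig_diagonal_add_smul_mutT hμ
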